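/- Let ρ be a density operator on ℂ^d with spectral decomposition ρ = Σ_i α_i|i⟩⟨i|, let S be the symmetric projector on ℂ^d ⊗ ℂ^d, and let S̃ = S/Tr(S) be the normalized maximally mixed symmetric state. Then the operator ω = S(ρ⊗ρ)S + (1 − Tr(S(ρ⊗ρ)S)) S̃ is a convex combination of operators of the form |ψ⟩⟨ψ|^{⊗2} with ψ a unit vector in ℂ^d. -/

import Mathlib

open Matrix BigOperators
open scoped Kronecker ComplexConjugate

noncomputable section

def swapMat (I : Type*) [DecidableEq I] [Fintype I] : Matrix (I × I) (I × I) ℂ :=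
  fun p q => if p.1 = q.2 ∧ p.2 = q.1 then 1 else 0

def symProj (I : Type*) [DecidableEq I] [Fintype I] : Matrix (I × I) (I × I) ℂ :=
  (2⁻¹ : ℂ) • (1 + swapMat I)

def asymProj (I : Type*) [DecidableEq I] [Fintype I] : Matrix (I × I) (I × I) ℂ :=
  (2⁻¹ : ℂ) • (1 - swapMat I)

/-- reordering (1,2,3,4) ↦ (1,3,2,4) of tensor factors -/
def reorder (A B : Type*) : ((A × B) × (A × B)) ≃ ((A × A) × (B × B)) where
  toFun x := ((x.1.1, x.2.1), (x.1.2, x.2.2))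
  invFun y := ((y.1.1, y.2.1), (y.1.2, y.2.2))
  left_inv x := rfl
  right_inv y := rfl

/-- |ψ⟩⟨ψ| -/
def outer {I : Type*} (ψ : I → ℂ) : Matrix I I ℂ := fun i j => ψ i * conj (ψ j)

/-- ψ ⊗ ψ -/
def vec2 {I : Type*} (ψ : I → ℂ) : I × I → ℂ := fun p => ψ p.1 * ψ p.2

/-- |ψ⟩⟨ψ|^{⊗2} -/
def pure2 {I : Type*} (ψ : I → ℂ) : Matrix (I × I) (I × I) ℂ := outer (vec2 ψ)

def unitVec {I : Type*} [Fintype I] (ψ : I → ℂ) : Prop := ∑ i, Complex.normSq (ψ i) = 1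

/-- partial trace over the second factor -/
def ptraceB {A B : Type*} [Fintype B] (M : Matrix (A × B) (A × B) ℂ) : Matrix A A ℂ :=
  fun a a' => ∑ b, M (a, b) (a', b)

/-- reindex an operator on (ℂ^A ⊗ ℂ^B)^{⊗2} as an operator on (ℂ^A)^{⊗2} ⊗ (ℂ^B)^{⊗2} -/
def reindexAB {A B : Type*} (M : Matrix ((A × B) × (A × B)) ((A × B) × (A × B)) ℂ) :
    Matrix ((A × A) × (B × B)) ((A × A) × (B × B)) ℂ :=
  M.submatrix (reorder A B).symm (reorder A B).symm

/-!
Write `ρ = ∑ᵢ |uᵢ⟩⟨uᵢ|` (possible as `ρ ⪰ 0`) and let `ψ_z = ∑ᵢ zᵢ uᵢ` for independent uniformly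
random fourth roots of unity `zᵢ`. Since `𝔼[zᵢ zⱼ z̄ₖ z̄ₗ]` is the indicator of `{i, j} = {k, l}`,
`𝔼 |ψ_z⟩⟨ψ_z|^{⊗2} = (ρ ⊗ ρ)(1 + F) - ∑ᵢ |uᵢ⟩⟨uᵢ|^{⊗2}` with `F` the swap, while
`S(ρ ⊗ ρ)S = ½ (ρ ⊗ ρ)(1 + F)`. So `S(ρ ⊗ ρ)S`, and (taking `ρ = 1`) `S` itself, are nonnegative
combinations of operators `|ψ⟩⟨ψ|^{⊗2}`. The weight `1 - Tr(S(ρ ⊗ ρ)S)` is nonnegative because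
`Tr(SAS) ≤ Tr A` for `A ⪰ 0`, so `ω` lies in the cone spanned by these operators; as `Tr ω = 1`,
rescaling every `ψ` to a unit vector turns the combination into a convex one.
-/

section SwapMat

variable {I : Type*} [DecidableEq I] [Fintype I]

@[simp]
lemma swapMat_mul_apply (M : Matrix (I × I) (I × I) ℂ) (p q : I × I) :
    (swapMat I * M) p q = M p.swap q := by
  rw [Matrix.mul_apply, Finset.sum_eq_single p.swap]
  · simp [swapMat]
  · rintro r - hr
    simp only [swapMat, ite_mul, one_mul, zero_mul, ite_eq_right_iff]
    rintro ⟨h1, h2⟩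
    exact absurd (Prod.ext h2.symm h1.symm) hr
  · simp

@[simp]
lemma mul_swapMat_apply (M : Matrix (I × I) (I × I) ℂ) (p q : I × I) :
    (M * swapMat I) p q = M p q.swap := by
  rw [Matrix.mul_apply, Finset.sum_eq_single q.swap]
  · simp [swapMat]
  · rintro r - hr
    simp only [swapMat, mul_ite, mul_one, mul_zero, ite_eq_right_iff]
    rintro ⟨h1, h2⟩
    exact absurd (Prod.ext h1 h2) hr
  · simp

lemma swapMat_mul_swapMat : swapMat I * swapMat I = 1 := by
  ext p q
  simp only [swapMat_mul_apply, swapMat, Matrix.one_apply, Prod.ext_iff, Prod.fst_swap,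
    Prod.snd_swap]
  aesop

lemma conjTranspose_swapMat : (swapMat I)ᴴ = swapMat I := by
  ext p q
  simp only [swapMat, Matrix.conjTranspose_apply]
  split_ifs <;> simp_all

lemma trace_swapMat : (swapMat I).trace = Fintype.card I := by
  simp only [Matrix.trace, Matrix.diag, swapMat, Fintype.sum_prod_type]
  have h (a b : I) : (a = b ∧ b = a) ↔ a = b := ⟨And.left, fun h => ⟨h, h.symm⟩⟩
  simp [h]

lemma symProj_mul_symProj : symProj I * symProj I = symProj I := by
  simp only [symProj, Matrix.smul_mul, Matrix.mul_smul, Matrix.add_mul, Matrix.mul_add,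
    Matrix.one_mul, Matrix.mul_one, swapMat_mul_swapMat, smul_smul, smul_add]
  module

lemma asymProj_mul_asymProj : asymProj I * asymProj I = asymProj I := by
  simp only [asymProj, Matrix.smul_mul, Matrix.mul_smul, Matrix.sub_mul, Matrix.mul_sub,
    Matrix.one_mul, Matrix.mul_one, swapMat_mul_swapMat, smul_smul, smul_sub]
  module

lemma symProj_add_asymProj : symProj I + asymProj I = 1 := by
  simp only [symProj, asymProj]
  module

lemma conjTranspose_asymProj : (asymProj I)ᴴ = asymProj I := by
  simp [asymProj, Matrix.conjTranspose_smul, conjTranspose_swapMat]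

lemma trace_symProj :
    (symProj I).trace = (((Fintype.card I ^ 2 + Fintype.card I) / 2 : ℝ) : ℂ) := by
  simp only [symProj, Matrix.trace_smul, Matrix.trace_add, Matrix.trace_one, Fintype.card_prod,
    trace_swapMat, smul_eq_mul]
  push_cast
  ring

lemma symProj_mul_mul_symProj_apply (M : Matrix (I × I) (I × I) ℂ) (p q : I × I) :
    (symProj I * M * symProj I) p q
      = 4⁻¹ * (M p q + M p q.swap + M p.swap q + M p.swap q.swap) := by
  simp only [symProj, Matrix.smul_mul, Matrix.mul_smul, Matrix.add_mul, Matrix.mul_add,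
    Matrix.smul_apply, Matrix.add_apply, Matrix.one_mul, Matrix.mul_one, smul_eq_mul,
    swapMat_mul_apply, mul_swapMat_apply]
  ring

open scoped ComplexOrder in
lemma trace_symProj_mul_mul_symProj_le {A : Matrix (I × I) (I × I) ℂ} (hA : A.PosSemidef) :
    (symProj I * A * symProj I).trace ≤ A.trace := by
  have hasym := (hA.conjTranspose_mul_mul_same (asymProj I)).trace_nonneg
  rw [conjTranspose_asymProj] at hasym
  have hsplit : A.trace
      = (symProj I * A * symProj I).trace + (asymProj I * A * asymProj I).trace := by
    rw [Matrix.trace_mul_cycle, symProj_mul_symProj, Matrix.trace_mul_cycle (asymProj I),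
      asymProj_mul_asymProj, ← Matrix.trace_add, ← Matrix.add_mul, symProj_add_asymProj,
      Matrix.one_mul]
  rw [hsplit]
  exact le_add_of_nonneg_right hasym

end SwapMat

/-- Fourth roots of unity suffice as random phases: only moments `ζ ^ e * conj ζ ^ f` with
`e, f ≤ 2` occur, and these average to `[e = f]`. -/
def phase (k : Fin 4) : ℂ := Complex.I ^ (k : ℕ)

lemma sum_phase_pow_mul_conj_pow {e f : ℕ} (he : e ≤ 2) (hf : f ≤ 2) :
    ∑ w : Fin 4, phase w ^ e * conj (phase w) ^ f = if e = f then 4 else 0 := by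
  interval_cases e <;> interval_cases f <;>
    simp [phase, Fin.sum_univ_four, pow_succ, Complex.ext_iff] <;> norm_num

lemma pair_indicator_eq_iff {ι : Type*} [DecidableEq ι] (i j k l : ι) :
    (∀ m, (if m = i then 1 else 0) + (if m = j then 1 else 0)
      = (if m = k then 1 else 0) + (if m = l then 1 else 0 : ℕ))
      ↔ (i = k ∧ j = l) ∨ (i = l ∧ j = k) := by
  constructor
  · intro h
    have hi := h i
    have hj := h j
    by_cases hik : i = k <;> by_cases hil : i = l <;> by_cases hjk : j = k <;>
      by_cases hjl : j = l <;> simp_all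
  · rintro (⟨rfl, rfl⟩ | ⟨rfl, rfl⟩) m
    · rfl
    · exact add_comm _ _

lemma sum_phase_mul_phase_mul_conj_mul_conj {ι : Type*} [Fintype ι] [DecidableEq ι]
    (i j k l : ι) :
    ∑ z : ι → Fin 4, phase (z i) * phase (z j) * conj (phase (z k)) * conj (phase (z l))
      = if (i = k ∧ j = l) ∨ (i = l ∧ j = k) then (4 : ℂ) ^ Fintype.card ι else 0 := by
  set a : ι → ℕ := fun m => (if m = i then 1 else 0) + (if m = j then 1 else 0)
  set b : ι → ℕ := fun m => (if m = k then 1 else 0) + (if m = l then 1 else 0)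
  have hfactor (z : ι → Fin 4) :
      phase (z i) * phase (z j) * conj (phase (z k)) * conj (phase (z l))
        = ∏ m, phase (z m) ^ a m * conj (phase (z m)) ^ b m := by
    simp only [a, b, pow_add, pow_ite, pow_one, pow_zero, Finset.prod_mul_distrib,
      Finset.prod_ite_eq', Finset.mem_univ, if_true]
    ring
  have hle (m x y : ι) : (if m = x then 1 else 0) + (if m = y then 1 else 0) ≤ 2 := by
    split_ifs <;> norm_num
  rw [Finset.sum_congr rfl fun z _ => hfactor z,
    ← Fintype.prod_sum fun m w => phase w ^ a m * conj (phase w) ^ b m,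
    Finset.prod_congr rfl fun m _ => sum_phase_pow_mul_conj_pow (hle m i j) (hle m k l),
    Fintype.prod_ite_zero, Finset.prod_const, Finset.card_univ]
  simp only [pair_indicator_eq_iff]

lemma sum_ite_pair_mul {ι R : Type*} [Fintype ι] [DecidableEq ι] [CommRing R]
    (F : ι → ι → ι → ι → R) :
    ∑ i, ∑ j, ∑ k, ∑ l, (if (i = k ∧ j = l) ∨ (i = l ∧ j = k) then F i j k l else 0)
      = ∑ i, ∑ j, F i j i j + ∑ i, ∑ j, F i j j i - ∑ i, F i i i i := by
  have hsplit (i j k l : ι) :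
      (if (i = k ∧ j = l) ∨ (i = l ∧ j = k) then F i j k l else 0)
        = (if j = l ∧ i = k then F i j k l else 0) + (if i = l ∧ j = k then F i j k l else 0)
          - (if k = l ∧ j = k ∧ i = j then F i j k l else 0) := by
    grind
  simp only [hsplit, Finset.sum_add_distrib, Finset.sum_sub_distrib, ite_and,
    Finset.sum_ite_eq, Finset.mem_univ, if_true]

lemma pure2_sum_smul_apply {I ι : Type*} [Fintype ι] (c : ι → ℂ) (u : ι → I → ℂ)
    (a b a' b' : I) :
    pure2 (∑ i, c i • u i) (a, b) (a', b')
      = ∑ i, ∑ j, ∑ k, ∑ l, c i * c j * conj (c k) * conj (c l)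
          * (u i a * u j b * conj (u k a') * conj (u l b')) := by
  simp only [pure2, outer, vec2, Finset.sum_apply, Pi.smul_apply, smul_eq_mul, map_mul, map_sum,
    Finset.sum_mul_sum]
  refine Finset.sum_congr rfl fun i _ => ?_
  rw [Finset.sum_comm]
  refine Finset.sum_congr rfl fun j _ => Finset.sum_congr rfl fun k _ =>
    Finset.sum_congr rfl fun l _ => ?_
  ring

lemma kronecker_mul_one_add_swapMat_apply {I : Type*} [Fintype I] [DecidableEq I]
    (ρ : Matrix I I ℂ) (a b a' b' : I) :
    ((ρ ⊗ₖ ρ) * (1 + swapMat I)) (a, b) (a', b') = ρ a a' * ρ b b' + ρ a b' * ρ b a' := by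
  simp [Matrix.mul_add, Matrix.kroneckerMap_apply]

lemma sum_pure2_phase {I ι : Type*} [Fintype I] [DecidableEq I] [Fintype ι] [DecidableEq ι]
    (u : ι → I → ℂ) :
    ∑ z : ι → Fin 4, pure2 (∑ i, phase (z i) • u i)
      = (4 ^ Fintype.card ι : ℂ) • (((∑ i, outer (u i)) ⊗ₖ (∑ i, outer (u i)))
          * (1 + swapMat I) - ∑ i, pure2 (u i)) := by
  ext ⟨a, b⟩ ⟨a', b'⟩
  set F : ι → ι → ι → ι → ℂ := fun i j k l => u i a * u j b * conj (u k a') * conj (u l b')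
  have hlhs : ∑ z : ι → Fin 4, pure2 (∑ i, phase (z i) • u i) (a, b) (a', b')
      = ∑ i, ∑ j, ∑ k, ∑ l,
          (if (i = k ∧ j = l) ∨ (i = l ∧ j = k) then (4 : ℂ) ^ Fintype.card ι * F i j k l
            else 0) := by
    simp only [pure2_sum_smul_apply]
    rw [Finset.sum_comm]
    refine Finset.sum_congr rfl fun i _ => ?_
    rw [Finset.sum_comm]
    refine Finset.sum_congr rfl fun j _ => ?_
    rw [Finset.sum_comm]
    refine Finset.sum_congr rfl fun k _ => ?_
    rw [Finset.sum_comm]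
    refine Finset.sum_congr rfl fun l _ => ?_
    rw [← Finset.sum_mul, sum_phase_mul_phase_mul_conj_mul_conj, ite_mul, zero_mul]
  rw [Matrix.sum_apply, hlhs, Matrix.smul_apply, Matrix.sub_apply,
    kronecker_mul_one_add_swapMat_apply, sum_ite_pair_mul]
  simp only [Matrix.sum_apply, outer, pure2, vec2, F, map_mul, Finset.sum_mul_sum, smul_eq_mul]
  simp only [mul_sub, mul_add, Finset.mul_sum]
  congr 1
  congr 1
  all_goals refine Finset.sum_congr rfl fun i _ => ?_
  · exact Finset.sum_congr rfl fun j _ => by ring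
  · exact Finset.sum_congr rfl fun j _ => by ring
  · ring

section Cone

variable {I : Type*}

lemma pure2_smul (c : ℝ) (ψ : I → ℂ) : pure2 (c • ψ) = c ^ 4 • pure2 ψ := by
  ext p q
  simp only [pure2, outer, vec2, Pi.smul_apply, Matrix.smul_apply, Complex.real_smul, map_mul,
    Complex.conj_ofReal]
  push_cast
  ring

lemma trace_pure2 [Fintype I] (ψ : I → ℂ) :
    (pure2 ψ).trace = (((∑ i, Complex.normSq (ψ i)) ^ 2 : ℝ) : ℂ) := by
  simp only [Matrix.trace, Matrix.diag, pure2, outer, vec2, Fintype.sum_prod_type, map_mul]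
  push_cast
  rw [sq, Finset.sum_mul_sum]
  refine Finset.sum_congr rfl fun a _ => Finset.sum_congr rfl fun b _ => ?_
  rw [← Complex.mul_conj, ← Complex.mul_conj]
  ring

def pure2States (I : Type*) [Fintype I] : Set (Matrix (I × I) (I × I) ℂ) :=
  {M | ∃ ψ : I → ℂ, unitVec ψ ∧ M = pure2 ψ}

lemma trace_eq_one_of_mem_convexHull [Fintype I] {K : Matrix (I × I) (I × I) ℂ}
    (hK : K ∈ convexHull ℝ (pure2States I)) : K.trace = 1 := by
  refine convexHull_min ?_
    ((convex_singleton (1 : ℂ)).linear_preimage (Matrix.traceLinearMap (I × I) ℝ ℂ)) hK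
  rintro _ ⟨ψ, hψ, rfl⟩
  rw [unitVec] at hψ
  simp [trace_pure2, hψ]

lemma exists_mem_pure2States_pure2_eq_smul [Fintype I] [Nonempty I] (ψ : I → ℂ) :
    ∃ t : ℝ, 0 ≤ t ∧ ∃ K ∈ pure2States I, pure2 ψ = t • K := by
  classical
  set N := ∑ i, Complex.normSq (ψ i)
  by_cases hN : N = 0
  · have hψ : ψ = 0 := funext fun i => Complex.normSq_eq_zero.mp <|
      (Finset.sum_eq_zero_iff_of_nonneg fun j _ => Complex.normSq_nonneg (ψ j)).mp hN i
        (Finset.mem_univ i)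
    obtain ⟨i⟩ := ‹Nonempty I›
    refine ⟨0, le_rfl, pure2 (Pi.single i 1), ⟨Pi.single i 1, ?_, rfl⟩, ?_⟩
    · simp [unitVec, Pi.single_apply, apply_ite Complex.normSq]
    · ext; simp [hψ, pure2, outer, vec2]
  have hNpos : 0 < N := lt_of_le_of_ne (Finset.sum_nonneg fun j _ => Complex.normSq_nonneg _)
    (Ne.symm hN)
  set c := Real.sqrt N
  have hc : c ^ 2 = N := Real.sq_sqrt hNpos.le
  have hc0 : c ≠ 0 := by positivity
  refine ⟨c ^ 4, by positivity, pure2 (c⁻¹ • ψ), ⟨c⁻¹ • ψ, ?_, rfl⟩, ?_⟩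
  · simp only [unitVec, Pi.smul_apply, Complex.real_smul, Complex.normSq_mul,
      Complex.normSq_ofReal, ← Finset.mul_sum]
    field_simp
    exact hc.symm
  · rw [pure2_smul, smul_smul, ← mul_pow, mul_inv_cancel₀ hc0, one_pow, one_smul]

def pure2Cone (I : Type*) : PointedCone ℝ (Matrix (I × I) (I × I) ℂ) :=
  PointedCone.hull ℝ (Set.range pure2)

lemma pure2_mem_pure2Cone (ψ : I → ℂ) : pure2 ψ ∈ pure2Cone I :=
  PointedCone.subset_hull ⟨ψ, rfl⟩

open scoped ComplexOrder in
lemma smul_mem_pure2Cone {c : ℂ} (hc : 0 ≤ c) {M : Matrix (I × I) (I × I) ℂ}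
    (hM : M ∈ pure2Cone I) : c • M ∈ pure2Cone I := by
  obtain ⟨r, hr, rfl⟩ := RCLike.nonneg_iff_exists_ofReal.mp hc
  convert (pure2Cone I).smul_mem hr hM using 1
  ext
  simp [Complex.real_smul]

lemma exists_eq_smul_of_mem_pure2Cone [Fintype I] [Nonempty I] {M : Matrix (I × I) (I × I) ℂ}
    (hM : M ∈ pure2Cone I) :
    ∃ t : ℝ, 0 ≤ t ∧ ∃ K ∈ convexHull ℝ (pure2States I), M = t • K := by
  induction hM using Submodule.span_induction with
  | mem M hM =>
    obtain ⟨ψ, rfl⟩ := hM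
    obtain ⟨t, ht, K, hK, hψK⟩ := exists_mem_pure2States_pure2_eq_smul ψ
    exact ⟨t, ht, K, subset_convexHull ℝ _ hK, hψK⟩
  | zero =>
    obtain ⟨t, -, K, hK, -⟩ := exists_mem_pure2States_pure2_eq_smul (0 : I → ℂ)
    exact ⟨0, le_rfl, K, subset_convexHull ℝ _ hK, (zero_smul ℝ K).symm⟩
  | add M₁ M₂ _ _ h₁ h₂ =>
    obtain ⟨t₁, ht₁, K₁, hK₁, rfl⟩ := h₁
    obtain ⟨t₂, ht₂, K₂, hK₂, rfl⟩ := h₂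
    by_cases ht : t₁ + t₂ = 0
    · obtain ⟨rfl, rfl⟩ : t₁ = 0 ∧ t₂ = 0 := ⟨by linarith, by linarith⟩
      exact ⟨0, le_rfl, K₁, hK₁, by simp⟩
    refine ⟨t₁ + t₂, by positivity, (t₁ / (t₁ + t₂)) • K₁ + (t₂ / (t₁ + t₂)) • K₂,
      convex_convexHull ℝ _ hK₁ hK₂ (by positivity) (by positivity) (by field_simp), ?_⟩
    rw [smul_add, smul_smul, smul_smul, mul_div_cancel₀ _ ht, mul_div_cancel₀ _ ht]
  | smul c M _ h =>
    obtain ⟨t, ht, K, hK, rfl⟩ := h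
    exact ⟨c * t, mul_nonneg c.2 ht, K, hK, by rw [← Nonneg.coe_smul, smul_smul]⟩

lemma mem_convexHull_of_mem_pure2Cone [Fintype I] [Nonempty I] {M : Matrix (I × I) (I × I) ℂ}
    (hM : M ∈ pure2Cone I) (htr : M.trace = 1) : M ∈ convexHull ℝ (pure2States I) := by
  obtain ⟨t, -, K, hK, rfl⟩ := exists_eq_smul_of_mem_pure2Cone hM
  rw [Matrix.trace_smul, trace_eq_one_of_mem_convexHull hK, Complex.real_smul, mul_one,
    Complex.ofReal_eq_one] at htr
  rwa [htr, one_smul]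

end Cone

section Symmetrization

variable {I : Type*} [Fintype I] [DecidableEq I]

lemma symProj_mul_kronecker_mul_symProj (ρ : Matrix I I ℂ) :
    symProj I * (ρ ⊗ₖ ρ) * symProj I = (2⁻¹ : ℂ) • ((ρ ⊗ₖ ρ) * (1 + swapMat I)) := by
  ext ⟨a, b⟩ ⟨a', b'⟩
  rw [symProj_mul_mul_symProj_apply, Matrix.smul_apply, kronecker_mul_one_add_swapMat_apply]
  simp only [Prod.swap_prod_mk, Matrix.kroneckerMap_apply, smul_eq_mul]
  ring

open scoped ComplexOrder in
lemma symProj_mul_kronecker_mul_symProj_mem_pure2Cone {ρ : Matrix I I ℂ} (hρ : ρ.PosSemidef) :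
    symProj I * (ρ ⊗ₖ ρ) * symProj I ∈ pure2Cone I := by
  obtain ⟨m, u, rfl⟩ := Matrix.posSemidef_iff_eq_sum_vecMulVec.mp hρ
  change symProj I * ((∑ i, outer (u i)) ⊗ₖ (∑ i, outer (u i))) * symProj I ∈ pure2Cone I
  have hdecomp : ((∑ i, outer (u i)) ⊗ₖ (∑ i, outer (u i))) * (1 + swapMat I)
      = ((4 : ℂ) ^ m)⁻¹ • ∑ z : Fin m → Fin 4, pure2 (∑ i, phase (z i) • u i)
        + ∑ i, pure2 (u i) := by
    rw [sum_pure2_phase, Fintype.card_fin, smul_smul, inv_mul_cancel₀ (by norm_num), one_smul,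
      sub_add_cancel]
  rw [symProj_mul_kronecker_mul_symProj, hdecomp]
  refine smul_mem_pure2Cone (by positivity) (add_mem (smul_mem_pure2Cone (by positivity) ?_) ?_)
  · exact sum_mem fun z _ => pure2_mem_pure2Cone _
  · exact sum_mem fun i _ => pure2_mem_pure2Cone _

open scoped ComplexOrder in
lemma symProj_mem_pure2Cone : symProj I ∈ pure2Cone I := by
  simpa [Matrix.one_kronecker_one, symProj_mul_symProj] using
    symProj_mul_kronecker_mul_symProj_mem_pure2Cone (Matrix.PosSemidef.one (n := I) (R := ℂ))

end Symmetrization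

open scoped ComplexOrder in
theorem stmt_5 (d : ℕ) (ρ : Matrix (Fin d) (Fin d) ℂ)
    (hpsd : ρ.PosSemidef) (htr : ρ.trace = 1)
    (ω : Matrix (Fin d × Fin d) (Fin d × Fin d) ℂ)
    (hω : ω = symProj (Fin d) * (ρ ⊗ₖ ρ) * symProj (Fin d) +
        (1 - (symProj (Fin d) * (ρ ⊗ₖ ρ) * symProj (Fin d)).trace) •
          ((symProj (Fin d)).trace⁻¹ • symProj (Fin d))) :
    ω ∈ convexHull ℝ {M : Matrix (Fin d × Fin d) (Fin d × Fin d) ℂ |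
      ∃ ψ : Fin d → ℂ, unitVec ψ ∧ M = pure2 ψ} := by
  set X := symProj (Fin d) * (ρ ⊗ₖ ρ) * symProj (Fin d)
  have : Nonempty (Fin d) := by
    by_contra h
    rw [not_nonempty_iff] at h
    simp [Matrix.trace] at htr
  have hX : X.trace ≤ 1 := by
    simpa [Matrix.trace_kronecker, htr] using
      trace_symProj_mul_mul_symProj_le (hpsd.kronecker hpsd)
  have hS : 0 < (symProj (Fin d)).trace := by
    rw [trace_symProj, Complex.zero_lt_real]
    positivity
  have hcoef : 0 ≤ (1 - X.trace) * (symProj (Fin d)).trace⁻¹ :=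
    mul_nonneg (sub_nonneg.mpr hX) (inv_nonneg.mpr hS.le)
  rw [hω, smul_smul]
  refine mem_convexHull_of_mem_pure2Cone (add_mem
    (symProj_mul_kronecker_mul_symProj_mem_pure2Cone hpsd)
    (smul_mem_pure2Cone hcoef symProj_mem_pure2Cone)) ?_
  rw [Matrix.trace_add, Matrix.trace_smul, smul_eq_mul, mul_assoc, inv_mul_cancel₀ hS.ne',
    mul_one, add_sub_cancel]
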